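/- A graph G is 2-localizable (its vertex set partitions into exactly two strong cliques) if and only if the complement of G is a bipartite graph without isolated vertices. -/

import Mathlib

variable {V : Type*} [Fintype V] [DecidableEq V]

/-- `S` is an independent set in `G`. -/
def IsIndep (G : SimpleGraph V) (S : Finset V) : Prop :=
  ∀ ⦃u⦄, u ∈ S → ∀ ⦃v⦄, v ∈ S → ¬ G.Adj u v

/-- `S` is a maximal independent set in `G`. -/
def MaxIndep (G : SimpleGraph V) (S : Finset V) : Prop :=
  IsIndep G S ∧ ∀ T, IsIndep G T → S ⊆ T → T = S

/-- `C` is a strong clique in `G`: a clique meeting every maximal independent set. -/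
def IsStrongClique (G : SimpleGraph V) (C : Finset V) : Prop :=
  G.IsClique ↑C ∧ ∀ S, MaxIndep G S → (C ∩ S).Nonempty

/-- `G` is localizable: its vertex set partitions into strong cliques. -/
def Localizable (G : SimpleGraph V) : Prop :=
  ∃ (k : ℕ) (C : Fin k → Finset V), (∀ j, IsStrongClique G (C j)) ∧ ∀ v, ∃! j, v ∈ C j

/-- The independence number `α(G)`. -/
noncomputable def alpha (G : SimpleGraph V) : ℕ :=
  sSup {n | ∃ S : Finset V, IsIndep G S ∧ S.card = n}

/-- The independent domination number `i(G)`. -/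
noncomputable def indomNum (G : SimpleGraph V) : ℕ :=
  sInf {n | ∃ S : Finset V, MaxIndep G S ∧ S.card = n}

/-- The clique cover number `θ(G)`. -/
noncomputable def theta (G : SimpleGraph V) : ℕ :=
  sInf {n | ∃ C : Fin n → Finset V, (∀ j, G.IsClique ↑(C j)) ∧ ∀ v, ∃! j, v ∈ C j}

/-- `G` is well-covered: all maximal independent sets have the same size. -/
def WellCovered (G : SimpleGraph V) : Prop :=
  ∀ S T, MaxIndep G S → MaxIndep G T → S.card = T.card

/-! In a 2-localizable graph each vertex lies in exactly one of the two cliques; extending it to a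
maximal independent set, which must meet the other clique, produces a non-neighbour. Conversely,
the colour classes of a 2-colouring of `Gᶜ` are cliques of `G`. If a maximal independent set `S`
missed the class of colour `j`, take `v ∈ S` and a `Gᶜ`-neighbour `w` of `v`: `w` has colour `j`,
so `w ∉ S` and `w` has a `G`-neighbour `s ∈ S`. Then `s ≠ v` are non-adjacent in `G` and share
the other colour, so they are adjacent in `Gᶜ` with equal colours. -/

section
-- A fresh `V`, so that the lemmas do not pick up the ambient `[Fintype V] [DecidableEq V]`.
variable {V : Type*} {G : SimpleGraph V}

lemma isIndep_singleton (v : V) : IsIndep G {v} := by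
  intro a ha b hb
  rw [Finset.mem_singleton] at ha hb
  rw [ha, hb]
  exact G.irrefl

lemma IsIndep.exists_maxIndep_superset [Fintype V] {S : Finset V} (hS : IsIndep G S) :
    ∃ T, MaxIndep G T ∧ S ⊆ T := by
  classical
  obtain ⟨T, ⟨hT, hST⟩, hmax⟩ :=
    (Set.toFinite {T : Finset V | IsIndep G T ∧ S ⊆ T}).exists_maximal ⟨S, hS, subset_rfl⟩
  exact ⟨T, ⟨hT, fun U hU hTU => (hmax ⟨hU, hST.trans hTU⟩ hTU).antisymm hTU⟩, hST⟩

lemma MaxIndep.exists_adj_of_notMem [DecidableEq V] {S : Finset V} (hS : MaxIndep G S) {u : V}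
    (hu : u ∉ S) : ∃ s ∈ S, G.Adj u s := by
  by_contra! hnadj
  have hindep : IsIndep G (insert u S) := by
    intro a ha b hb
    rw [Finset.mem_insert] at ha hb
    rcases ha with rfl | ha <;> rcases hb with rfl | hb
    · exact G.irrefl
    · exact hnadj _ hb
    · exact fun hab => hnadj _ ha hab.symm
    · exact hS.1 ha hb
  exact hu (hS.2 _ hindep (Finset.subset_insert u S) ▸ Finset.mem_insert_self u S)

lemma MaxIndep.nonempty [Nonempty V] {S : Finset V} (hS : MaxIndep G S) : S.Nonempty := by
  classical
  obtain ⟨u⟩ := ‹Nonempty V›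
  by_cases hu : u ∈ S
  · exact ⟨u, hu⟩
  · obtain ⟨s, hs, -⟩ := hS.exists_adj_of_notMem hu
    exact ⟨s, hs⟩

lemma IsStrongClique.exists_compl_adj_of_notMem [Fintype V] [DecidableEq V] {C : Finset V}
    (hC : IsStrongClique G C) {v : V} (hv : v ∉ C) : ∃ w ∈ C, Gᶜ.Adj v w := by
  obtain ⟨S, hS, hvS⟩ := (isIndep_singleton (G := G) v).exists_maxIndep_superset
  obtain ⟨w, hw⟩ := hC.2 S hS
  obtain ⟨hwC, hwS⟩ := Finset.mem_inter.mp hw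
  have hvw : v ≠ w := fun h => hv (h ▸ hwC)
  exact ⟨w, hwC, (G.compl_adj v w).mpr ⟨hvw, hS.1 (hvS (Finset.mem_singleton_self v)) hwS⟩⟩

lemma colorable_compl_of_cliques_cover {ι : Type*} [Fintype ι] (C : ι → Finset V)
    (hC : ∀ j, G.IsClique (C j)) (hcover : ∀ v, ∃ j, v ∈ C j) :
    Gᶜ.Colorable (Fintype.card ι) := by
  choose f hf using hcover
  refine SimpleGraph.Coloring.colorable ⟨f, fun {v w} hvw hfvw => ?_⟩
  obtain ⟨hne, hnadj⟩ := (G.compl_adj v w).mp hvw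
  exact hnadj (hC (f v) (hf v) (hfvw ▸ hf w) hne)

lemma exists_notMem_of_existsUnique_mem {ι : Type*} [Nontrivial ι] {C : ι → Finset V} {v : V}
    (hv : ∃! j, v ∈ C j) : ∃ j, v ∉ C j := by
  obtain ⟨j, -, huniq⟩ := hv
  obtain ⟨j', hj'⟩ := exists_ne j
  exact ⟨j', fun hvj' => hj' (huniq j' hvj')⟩

variable [Fintype V] {α : Type*} [DecidableEq α]

lemma SimpleGraph.Coloring.isClique_compl_colorClass (c : Gᶜ.Coloring α) (j : α) :
    G.IsClique ↑(Finset.univ.filter (c · = j)) := by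
  intro v hv w hw hne
  simp only [Finset.coe_filter, Finset.mem_univ, true_and, Set.mem_ofPred_eq] at hv hw
  by_contra hnadj
  exact c.valid ((G.compl_adj v w).mpr ⟨hne, hnadj⟩) (hv.trans hw.symm)

lemma SimpleGraph.Coloring.isStrongClique_compl_colorClass [DecidableEq V] [Nonempty V]
    (c : Gᶜ.Coloring (Fin 2)) (hiso : ∀ v, ∃ w, Gᶜ.Adj v w) (j : Fin 2) :
    IsStrongClique G (Finset.univ.filter (c · = j)) := by
  refine ⟨c.isClique_compl_colorClass j, fun S hS => ?_⟩
  by_contra hmiss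
  have hcolor : ∀ s ∈ S, c s ≠ j := fun s hs hsj =>
    hmiss ⟨s, Finset.mem_inter.mpr ⟨by simpa using hsj, hs⟩⟩
  obtain ⟨v, hvS⟩ := hS.nonempty
  obtain ⟨w, hvw⟩ := hiso v
  have hwj : c w = j := by
    have := c.valid hvw
    have := hcolor v hvS
    omega
  obtain ⟨s, hsS, hws⟩ := hS.exists_adj_of_notMem fun hwS => hcolor w hwS hwj
  have hsv : s ≠ v := by
    rintro rfl
    exact ((G.compl_adj s w).mp hvw).2 hws.symm
  have hcs : c s = c v := by
    have := hcolor s hsS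
    have := hcolor v hvS
    omega
  exact c.valid ((G.compl_adj s v).mpr ⟨hsv, hS.1 hsS hvS⟩) hcs

end

theorem two_localizable_iff_complement_bipartite (G : SimpleGraph V) [Nonempty V] :
    (∃ C : Fin 2 → Finset V, (∀ j, IsStrongClique G (C j)) ∧ ∀ v, ∃! j, v ∈ C j) ↔
      (Gᶜ.Colorable 2 ∧ ∀ v : V, ∃ w, Gᶜ.Adj v w) := by
  constructor
  · rintro ⟨C, hstrong, hpart⟩
    have hcol :=
      colorable_compl_of_cliques_cover C (fun j => (hstrong j).1) (fun v => (hpart v).exists)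
    refine ⟨by simpa using hcol, fun v => ?_⟩
    obtain ⟨j, hvj⟩ := exists_notMem_of_existsUnique_mem (hpart v)
    obtain ⟨w, -, hvw⟩ := (hstrong j).exists_compl_adj_of_notMem hvj
    exact ⟨w, hvw⟩
  · rintro ⟨⟨c⟩, hiso⟩
    exact ⟨fun j => Finset.univ.filter (c · = j), c.isStrongClique_compl_colorClass hiso,
      fun v => ⟨c v, by simp, fun j hj => by simpa [eq_comm] using hj⟩⟩
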